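/- The plane-wave u = a·exp(±i·√(3-2c/a²)·(x-ct)), with real constants a ≠ 0 and c ≤ (3/2)a², is a travelling-wave solution of the Hirota-type peakon equation v_t + (1/2)((|u|²-|u_x|²)v)_x + i·Im(ū u_x)v = 0, where v = u - u_xx. -/

import Mathlib

open Complex

noncomputable section

def pdt (f : ℝ → ℝ → ℂ) (t x : ℝ) : ℂ := deriv (fun s => f s x) t
def pdx (f : ℝ → ℝ → ℂ) (t x : ℝ) : ℂ := deriv (fun y => f t y) x

/-- Hirota-type peakon equation. -/
def HirotaEq (u v : ℝ → ℝ → ℂ) : Prop :=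
  ∀ t x : ℝ,
    pdt v t x
      + (1/2) * pdx (fun t x =>
          ((Complex.normSq (u t x) - Complex.normSq (pdx u t x) : ℝ) : ℂ) * v t x) t x
      + Complex.I * ((((starRingEnd ℂ) (u t x)) * pdx u t x).im : ℂ) * v t x = 0

/-!
Every quantity in the equation is a constant multiple of the plane wave
`u = a exp(i k (x - c t))`: `u_x = i k u`, `v = (1 + k²) u`, `|u|² = a²`, `|u_x|² = k² a²` and
`Im(ū u_x) = k a²`. The equation therefore reduces to
`i k (1 + k²) (3 a² / 2 - c - k² a² / 2) u = 0`, which holds under the dispersion relation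
`k² a² = 3 a² - 2 c`; the choice `k = ±√(3 - 2c/a²)` satisfies it.
-/

def planeWave (a k c : ℝ) (t x : ℝ) : ℂ :=
  (a : ℂ) * exp (I * (k : ℂ) * ((x : ℂ) - (c : ℂ) * t))

lemma pdx_const_mul (B : ℂ) (f : ℝ → ℝ → ℂ) (t x : ℝ) :
    pdx (fun t x => B * f t x) t x = B * pdx f t x :=
  deriv_const_mul_field B

lemma pdt_const_mul (B : ℂ) (f : ℝ → ℝ → ℂ) (t x : ℝ) :
    pdt (fun t x => B * f t x) t x = B * pdt f t x :=
  deriv_const_mul_field B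

section planeWave

variable (a k c : ℝ)

lemma pdx_planeWave (t x : ℝ) :
    pdx (planeWave a k c) t x = I * k * planeWave a k c t x := by
  have h := (((hasDerivAt_id' x).ofReal_comp.sub_const ((c : ℂ) * t)).const_mul
    (I * (k : ℂ))).cexp.const_mul (a : ℂ)
  unfold pdx planeWave
  rw [h.deriv]
  push_cast
  ring

lemma pdt_planeWave (t x : ℝ) :
    pdt (planeWave a k c) t x = -(I * k * c) * planeWave a k c t x := by
  have h := ((((hasDerivAt_id' t).ofReal_comp.const_mul (c : ℂ)).const_sub (x : ℂ)).const_mul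
    (I * (k : ℂ))).cexp.const_mul (a : ℂ)
  unfold pdt planeWave
  rw [h.deriv]
  push_cast
  ring

lemma pdx_planeWave' :
    pdx (planeWave a k c) = fun t x => I * k * planeWave a k c t x :=
  funext fun t => funext (pdx_planeWave a k c t)

lemma normSq_planeWave (t x : ℝ) : normSq (planeWave a k c t x) = a ^ 2 := by
  have hphase : I * (k : ℂ) * ((x : ℂ) - (c : ℂ) * t) = ((k * (x - c * t) : ℝ) : ℂ) * I := by
    push_cast; ring
  rw [planeWave, normSq_mul, normSq_ofReal, hphase, normSq_eq_norm_sq, norm_exp_ofReal_mul_I]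
  ring

lemma normSq_pdx_planeWave (t x : ℝ) :
    normSq (pdx (planeWave a k c) t x) = k ^ 2 * a ^ 2 := by
  rw [pdx_planeWave, normSq_mul, normSq_mul, normSq_I, normSq_ofReal, normSq_planeWave]
  ring

lemma im_conj_mul_pdx_planeWave (t x : ℝ) :
    ((starRingEnd ℂ) (planeWave a k c t x) * pdx (planeWave a k c) t x).im = k * a ^ 2 := by
  rw [pdx_planeWave, mul_left_comm, ← normSq_eq_conj_mul_self, normSq_planeWave]
  simp only [mul_im, mul_re, I_re, I_im, ofReal_re, ofReal_im]
  ring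

lemma planeWave_sub_pdx_pdx :
    (fun t x => planeWave a k c t x - pdx (pdx (planeWave a k c)) t x)
      = fun t x => (1 + (k : ℂ) ^ 2) * planeWave a k c t x := by
  funext t x
  rw [pdx_planeWave', pdx_const_mul, pdx_planeWave]
  linear_combination (-(k : ℂ) ^ 2 * planeWave a k c t x) * I_sq

theorem hirotaEq_planeWave (hk : k ^ 2 * a ^ 2 = 3 * a ^ 2 - 2 * c) :
    HirotaEq (planeWave a k c)
      (fun t x => planeWave a k c t x - pdx (pdx (planeWave a k c)) t x) := by
  intro t x
  rw [planeWave_sub_pdx_pdx]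
  have hflux : (fun t x =>
      ((normSq (planeWave a k c t x) - normSq (pdx (planeWave a k c) t x) : ℝ) : ℂ)
        * ((1 + (k : ℂ) ^ 2) * planeWave a k c t x))
      = fun t x => ((a ^ 2 - k ^ 2 * a ^ 2 : ℝ) * (1 + (k : ℂ) ^ 2)) * planeWave a k c t x := by
    funext t x
    rw [normSq_planeWave, normSq_pdx_planeWave]
    ring
  rw [hflux, im_conj_mul_pdx_planeWave, pdt_const_mul, pdx_const_mul, pdt_planeWave,
    pdx_planeWave]
  have hk' : (k : ℂ) ^ 2 * (a : ℂ) ^ 2 = 3 * (a : ℂ) ^ 2 - 2 * c := by exact_mod_cast hk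
  push_cast
  linear_combination (-(1 / 2) * I * k * (1 + (k : ℂ) ^ 2) * planeWave a k c t x) * hk'

end planeWave

theorem hirota_planewave_solution (a c ε : ℝ) (ha : a ≠ 0)
    (hc : c ≤ (3/2) * a^2) (hε : ε = 1 ∨ ε = -1)
    (u v : ℝ → ℝ → ℂ)
    (hu : ∀ t x : ℝ, u t x = (a : ℂ) *
      Complex.exp (Complex.I * ((ε * Real.sqrt (3 - 2*c/a^2) : ℝ) : ℂ) * ((x : ℂ) - (c : ℂ) * t)))
    (hv : ∀ t x : ℝ, v t x = u t x - pdx (pdx u) t x) :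
    HirotaEq u v := by
  set k := ε * Real.sqrt (3 - 2 * c / a ^ 2)
  have hu_eq : u = planeWave a k c := funext fun t => funext (hu t)
  have hv_eq : v = fun t x => u t x - pdx (pdx u) t x := funext fun t => funext (hv t)
  have hradicand : 0 ≤ 3 - 2 * c / a ^ 2 := by
    rw [sub_nonneg, div_le_iff₀ (by positivity)]
    linarith
  have hε2 : ε ^ 2 = 1 := by rcases hε with rfl | rfl <;> norm_num
  have hdispersion : k ^ 2 * a ^ 2 = 3 * a ^ 2 - 2 * c := by
    rw [mul_pow, hε2, one_mul, Real.sq_sqrt hradicand]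
    field_simp
  subst hv_eq hu_eq
  exact hirotaEq_planeWave a k c hdispersion
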